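/- Let X be an uncountable standard Borel abelian group (or any abelian group in which every infinite subset has a Γ-closed superset of the same cardinality) and Γ a countable union of slim linear hypergraphs of arity three on X. Then (assuming AC) the chromatic number of Γ is countable: there is c : X → ℕ such that no Γ-hyperedge is monochromatic. -/

import Mathlib

/-!
Induction on `#A` shows that every `A ⊆ X` has an `ℕ`-colouring with no monochromatic edge inside
`A`. A countable `A` is coloured injectively. An uncountable `A` is covered by an increasing chain
`(T i)` of Γ-closed sets of smaller cardinality, indexed by the initial ordinal of `#A`; each layer
`T i` is coloured by induction, and the union `U i` of the earlier layers is Γ-closed, so the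
remainder graph over it is countably chromatic. A point whose first layer is `T i` gets the pair of
its colours in `T i` and in the remainder graph over `U i`.
-/

variable {X : Type*} [AddCommGroup X]

/-- The hyperedges of the slim linear hypergraph generated by `g 0, g 1, g 2`:
pairwise distinct triples satisfying `g 0 x₀ + g 1 x₁ + g 2 x₂ = 0` in some ordering. -/
def SlimEdge (g : Fin 3 → X →+ X) (x₀ x₁ x₂ : X) : Prop :=
  x₀ ≠ x₁ ∧ x₀ ≠ x₂ ∧ x₁ ≠ x₂ ∧
    ∃ σ : Equiv.Perm (Fin 3),
      g 0 (![x₀, x₁, x₂] (σ 0)) + g 1 (![x₀, x₁, x₂] (σ 1)) + g 2 (![x₀, x₁, x₂] (σ 2)) = 0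

/-- The triple of homomorphisms generates a slim linear hypergraph: all of them and
their pairwise sums are injective. -/
def IsSlim (g : Fin 3 → X →+ X) : Prop :=
  (∀ j, Function.Injective (g j)) ∧
  ∀ j k : Fin 3, j ≠ k → Function.Injective fun x => g j x + g k x

/-- Hyperedge of a union of slim linear hypergraphs. -/
def GEdge {ι : Type*} (g : ι → Fin 3 → X →+ X) (x₀ x₁ x₂ : X) : Prop :=
  ∃ i, SlimEdge (g i) x₀ x₁ x₂

/-- `A` is Γ-closed for the union Γ of the slim hypergraphs generated by `g i`:
a subgroup closed under the generating homomorphisms, their inverses, and the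
inverses of their pairwise sums. -/
def GammaClosed {ι : Type*} (g : ι → Fin 3 → X →+ X) (A : Set X) : Prop :=
  (0 : X) ∈ A ∧ (∀ x ∈ A, ∀ y ∈ A, x - y ∈ A) ∧
  (∀ i j, ∀ x ∈ A, g i j x ∈ A) ∧
  (∀ i j, ∀ x : X, g i j x ∈ A → x ∈ A) ∧
  (∀ i, ∀ j k : Fin 3, j ≠ k → ∀ x : X, g i j x + g i k x ∈ A → x ∈ A)

/-- The remainder graph of the union hypergraph over `A`: distinct points outside `A`
connected if some `z ∈ A` completes them to a hyperedge. -/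
def RemAdj {ι : Type*} (g : ι → Fin 3 → X →+ X) (A : Set X) (x y : X) : Prop :=
  x ∉ A ∧ y ∉ A ∧ x ≠ y ∧ ∃ i, ∃ z ∈ A, SlimEdge (g i) x y z

open Cardinal Set

universe u

section Symmetry

variable {g : Fin 3 → X →+ X} {x y z : X}

theorem SlimEdge.swap₀₁ (h : SlimEdge g x y z) : SlimEdge g y x z := by
  obtain ⟨hxy, hxz, hyz, σ, hσ⟩ := h
  have hv : ![y, x, z] ∘ Equiv.swap 0 1 = ![x, y, z] := by
    funext k; fin_cases k <;> rfl
  refine ⟨hxy.symm, hyz, hxz, σ.trans (Equiv.swap 0 1), ?_⟩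
  simpa only [Equiv.trans_apply, ← Function.comp_apply (f := ![y, x, z]), hv] using hσ

theorem SlimEdge.swap₁₂ (h : SlimEdge g x y z) : SlimEdge g x z y := by
  obtain ⟨hxy, hxz, hyz, σ, hσ⟩ := h
  have hv : ![x, z, y] ∘ Equiv.swap 1 2 = ![x, y, z] := by
    funext k; fin_cases k <;> rfl
  refine ⟨hxz, hxy, hyz.symm, σ.trans (Equiv.swap 1 2), ?_⟩
  simpa only [Equiv.trans_apply, ← Function.comp_apply (f := ![x, z, y]), hv] using hσ

theorem SlimEdge.exists_add_eq_zero (h : SlimEdge g x y z) :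
    ∃ a b c : Fin 3, a ≠ b ∧ g a x + g b y + g c z = 0 := by
  obtain ⟨-, -, -, σ, hσ⟩ := h
  refine ⟨σ.symm 0, σ.symm 1, σ.symm 2, by simp, ?_⟩
  have h := Equiv.sum_comp σ fun k => g (σ.symm k) (![x, y, z] k)
  simp only [Equiv.symm_apply_apply, Fin.sum_univ_three] at h
  rw [← hσ, h]
  rfl

theorem GEdge.swap₀₁ {ι : Type*} {g : ι → Fin 3 → X →+ X} (h : GEdge g x y z) : GEdge g y x z :=
  h.imp fun _ => SlimEdge.swap₀₁

theorem GEdge.swap₁₂ {ι : Type*} {g : ι → Fin 3 → X →+ X} (h : GEdge g x y z) : GEdge g x z y :=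
  h.imp fun _ => SlimEdge.swap₁₂

end Symmetry

namespace GammaClosed

variable {ι : Type*} {g : ι → Fin 3 → X →+ X} {A : Set X} {x y z : X}

theorem sub_mem (hA : GammaClosed g A) (hx : x ∈ A) (hy : y ∈ A) : x - y ∈ A := hA.2.1 x hx y hy

theorem apply_mem (hA : GammaClosed g A) (i : ι) (j : Fin 3) (hx : x ∈ A) : g i j x ∈ A :=
  hA.2.2.1 i j x hx

theorem mem_of_apply_mem (hA : GammaClosed g A) {i : ι} {j : Fin 3} (h : g i j x ∈ A) : x ∈ A :=
  hA.2.2.2.1 i j x h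

theorem mem_of_add_apply_mem (hA : GammaClosed g A) {i : ι} {j k : Fin 3} (hjk : j ≠ k)
    (h : g i j x + g i k x ∈ A) : x ∈ A :=
  hA.2.2.2.2 i j k hjk x h

def toAddSubgroup (hA : GammaClosed g A) : AddSubgroup X where
  carrier := A
  zero_mem' := hA.1
  add_mem' {x y} hx hy := by
    rw [← sub_neg_eq_add]
    exact hA.sub_mem hx (by simpa using hA.sub_mem hA.1 hy)
  neg_mem' {x} hx := by simpa using hA.sub_mem hA.1 hx

theorem add_mem (hA : GammaClosed g A) (hx : x ∈ A) (hy : y ∈ A) : x + y ∈ A :=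
  hA.toAddSubgroup.add_mem hx hy

theorem exists_add_apply_mem_of_slimEdge (hA : GammaClosed g A) {i : ι}
    (h : SlimEdge (g i) x y z) (hz : z ∈ A) : ∃ a b, a ≠ b ∧ g i a x + g i b y ∈ A := by
  obtain ⟨a, b, c, hab, h⟩ := h.exists_add_eq_zero
  refine ⟨a, b, hab, ?_⟩
  rw [eq_neg_of_add_eq_zero_left h]
  exact hA.toAddSubgroup.neg_mem (hA.apply_mem i c hz)

theorem mem_of_slimEdge (hA : GammaClosed g A) {i : ι} (h : SlimEdge (g i) x y z)
    (hy : y ∈ A) (hz : z ∈ A) : x ∈ A := by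
  obtain ⟨a, b, -, h⟩ := hA.exists_add_apply_mem_of_slimEdge h hz
  refine hA.mem_of_apply_mem (i := i) (j := a) ?_
  simpa using hA.sub_mem h (hA.apply_mem i b hy)

theorem sub_mem_of_add_apply_mem (hA : GammaClosed g A) {i : ι} {a b : Fin 3} {x' y' : X}
    (hx : x - x' ∈ A) (h : g i a x + g i b y ∈ A) (h' : g i a x' + g i b y' ∈ A) :
    y - y' ∈ A := by
  refine hA.mem_of_apply_mem (i := i) (j := b) ?_
  have key : g i b (y - y') = (g i a x + g i b y) - (g i a x' + g i b y') - g i a (x - x') := by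
    simp only [map_sub]; abel
  rw [key]
  exact hA.sub_mem (hA.sub_mem h h') (hA.apply_mem i a hx)

theorem sub_notMem_of_add_apply_mem (hA : GammaClosed g A) {i : ι} {a b : Fin 3} (hab : a ≠ b)
    (hx : x ∉ A) (h : g i a x + g i b y ∈ A) : x - y ∉ A := fun hxy => by
  refine hx (hA.mem_of_add_apply_mem (i := i) hab ?_)
  have key : g i a x + g i b x = (g i a x + g i b y) + g i b (x - y) := by
    simp only [map_sub]; abel
  rw [key]
  exact hA.add_mem h (hA.apply_mem i b hxy)

theorem iUnion {κ : Type*} [Nonempty κ] {T : κ → Set X} (hdir : Directed (· ⊆ ·) T)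
    (hT : ∀ k, GammaClosed g (T k)) : GammaClosed g (⋃ k, T k) := by
  refine ⟨mem_iUnion.2 ⟨Classical.arbitrary κ, (hT _).1⟩, ?_, ?_, ?_, ?_⟩ <;>
    simp only [mem_iUnion]
  · rintro x ⟨k, hx⟩ y ⟨l, hy⟩
    obtain ⟨m, hkm, hlm⟩ := hdir k l
    exact ⟨m, (hT m).sub_mem (hkm hx) (hlm hy)⟩
  · rintro i j x ⟨k, hx⟩
    exact ⟨k, (hT k).apply_mem i j hx⟩
  · rintro i j x ⟨k, hx⟩
    exact ⟨k, (hT k).mem_of_apply_mem hx⟩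
  · rintro i j j' hjj' x ⟨k, hx⟩
    exact ⟨k, (hT k).mem_of_add_apply_mem hjj' hx⟩

end GammaClosed

section LocallyCountable

variable {Q : Type*} {r : Q → Q → Prop}

theorem countable_setOf_reflTransGen (hr : ∀ u, {v | r u v}.Countable) (u : Q) :
    {v | Relation.ReflTransGen r u v}.Countable := by
  let step : Set Q → Set Q := fun S => ⋃ v ∈ S, {w | r v w}
  have hstep : ∀ n, (step^[n] {u}).Countable := by
    intro n
    induction n with
    | zero => exact countable_singleton u
    | succ n ih =>
      rw [Function.iterate_succ_apply']
      exact ih.biUnion fun v _ => hr v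
  refine (countable_iUnion hstep).mono fun v hv => ?_
  induction hv with
  | refl => exact mem_iUnion.2 ⟨0, rfl⟩
  | tail _ hvw ih =>
    obtain ⟨n, hn⟩ := mem_iUnion.1 ih
    refine mem_iUnion.2 ⟨n + 1, ?_⟩
    rw [Function.iterate_succ_apply']
    exact mem_biUnion hn hvw

/-- Colour each connected component, which is countable, injectively. -/
theorem exists_coloring_of_countable_neighbors [Std.Symm r]
    (hr : ∀ u, {v | r u v}.Countable) :
    ∃ c : Q → ℕ, ∀ u v, r u v → u ≠ v → c u ≠ c v := by
  have hinj (S : Set Q) : ∃ f : Q → ℕ, S.Countable → InjOn f S := by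
    by_cases hS : S.Countable
    · exact (countable_iff_exists_injOn.1 hS).imp fun f hf _ => hf
    · exact ⟨0, fun h => absurd h hS⟩
  choose f hf using hinj
  let component (u : Q) : Set Q := {v | Relation.ReflTransGen r u v}
  refine ⟨fun u => f (component u) u, fun u v huv hne heq => hne ?_⟩
  have hvu : Relation.ReflTransGen r v u := symm (Relation.ReflTransGen.single huv)
  have hcomp : component u = component v :=
    Set.ext fun w => ⟨hvu.trans, (Relation.ReflTransGen.single huv).trans⟩
  simp only [hcomp] at heq
  exact hf _ (countable_setOf_reflTransGen hr v) hvu .refl heq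

end LocallyCountable

namespace GammaClosed

variable {ι : Type*} {g : ι → Fin 3 → X →+ X} {A : Set X}

/-- The remainder graph factors through `X ⧸ A`, where the neighbours of a coset form a countable
set: for fixed `i, a, b`, the coset of `x` determines that of `y` when `g i a x + g i b y ∈ A`. -/
theorem exists_coloring_remAdj [Countable ι] (hA : GammaClosed g A) :
    ∃ e : X → ℕ, ∀ x y, RemAdj g A x y → e x ≠ e y := by
  let H := hA.toAddSubgroup
  let r (u v : X ⧸ H) : Prop := ∃ (i : ι) (a b : Fin 3) (x y : X),
    (x : X ⧸ H) = u ∧ (y : X ⧸ H) = v ∧ g i a x + g i b y ∈ A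
  have : Std.Symm r := ⟨fun _ _ ⟨i, a, b, x, y, hx, hy, h⟩ =>
    ⟨i, b, a, y, x, hy, hx, by rwa [add_comm]⟩⟩
  have hr (u : X ⧸ H) : {v | r u v}.Countable := by
    refine (countable_iUnion fun p : ι × Fin 3 × Fin 3 =>
      Subsingleton.countable (s := {v | ∃ x y : X, (x : X ⧸ H) = u ∧ (y : X ⧸ H) = v ∧
        g p.1 p.2.1 x + g p.1 p.2.2 y ∈ A}) ?_).mono ?_
    · rintro v ⟨x, y, hx, rfl, h⟩ v' ⟨x', y', hx', rfl, h'⟩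
      refine QuotientAddGroup.eq_iff_sub_mem.2 (hA.sub_mem_of_add_apply_mem ?_ h h')
      exact QuotientAddGroup.eq_iff_sub_mem.1 (hx.trans hx'.symm)
    · rintro v ⟨i, a, b, x, y, hx, hy, h⟩
      exact mem_iUnion.2 ⟨(i, a, b), x, y, hx, hy, h⟩
  obtain ⟨c, hc⟩ := exists_coloring_of_countable_neighbors hr
  refine ⟨fun x => c x, fun x y ⟨hx, _, _, i, z, hz, hxyz⟩ => ?_⟩
  obtain ⟨a, b, hab, h⟩ := hA.exists_add_apply_mem_of_slimEdge hxyz hz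
  exact hc _ _ ⟨i, a, b, x, y, rfl, rfl, h⟩ fun hxy =>
    hA.sub_notMem_of_add_apply_mem hab hx h (QuotientAddGroup.eq_iff_sub_mem.1 hxy)

end GammaClosed

def ProperColoringOn {ι : Type*} (g : ι → Fin 3 → X →+ X) (c : X → ℕ) (A : Set X) : Prop :=
  ∀ x₀ ∈ A, ∀ x₁ ∈ A, ∀ x₂ ∈ A, GEdge g x₀ x₁ x₂ → ¬(c x₀ = c x₁ ∧ c x₁ = c x₂)

theorem ProperColoringOn.mono {ι : Type*} {g : ι → Fin 3 → X →+ X} {c : X → ℕ} {A B : Set X}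
    (h : ProperColoringOn g c B) (hAB : A ⊆ B) : ProperColoringOn g c A :=
  fun x hx y hy z hz => h x (hAB hx) y (hAB hy) z (hAB hz)

theorem properColoringOn_of_injOn {ι : Type*} {g : ι → Fin 3 → X →+ X} {c : X → ℕ} {A : Set X}
    (hc : InjOn c A) : ProperColoringOn g c A :=
  fun _ hx _ hy _ _ ⟨_, hxyz⟩ hcol => hxyz.1 (hc hx hy hcol.1)

theorem exists_sorted_of_swap {α β : Type*} [LinearOrder β] (r : α → β) {P : α → α → α → Prop}
    (h₀₁ : ∀ {x y z}, P x y z → P y x z) (h₁₂ : ∀ {x y z}, P x y z → P x z y)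
    {x y z : α} (h : P x y z) : ∃ a b c, P a b c ∧ r c ≤ r b ∧ r b ≤ r a := by
  rcases le_total (r y) (r x) with hxy | hxy <;> rcases le_total (r z) (r y) with hyz | hyz <;>
    rcases le_total (r z) (r x) with hxz | hxz
  · exact ⟨x, y, z, h, hyz, hxy⟩
  · exact ⟨x, y, z, h, hyz, hxy⟩
  · exact ⟨x, z, y, h₁₂ h, hyz, hxz⟩
  · exact ⟨z, x, y, h₀₁ (h₁₂ h), hxy, hxz⟩
  · exact ⟨y, x, z, h₀₁ h, hxz, hxy⟩
  · exact ⟨y, z, x, h₁₂ (h₀₁ h), hxz, hyz⟩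
  · exact ⟨z, y, x, h₀₁ (h₁₂ (h₀₁ h)), hxy, hyz⟩
  · exact ⟨z, y, x, h₀₁ (h₁₂ (h₀₁ h)), hxy, hyz⟩

theorem exists_rank {α I : Type*} [LinearOrder I] [WellFoundedLT I] [Nonempty I]
    (T : I → Set α) :
    ∃ rk : α → I, ∀ x ∈ ⋃ i, T i, x ∈ T (rk x) ∧ x ∉ ⋃ j : Iio (rk x), T j := by
  have (x : α) : ∃ i, x ∈ ⋃ i, T i → x ∈ T i ∧ x ∉ ⋃ j : Iio i, T j := by
    by_cases hx : x ∈ ⋃ i, T i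
    · obtain ⟨i, hi, hmin⟩ := wellFounded_lt.has_min {i | x ∈ T i} (mem_iUnion.1 hx)
      refine ⟨i, fun _ => ⟨hi, ?_⟩⟩
      simp only [mem_iUnion]
      rintro ⟨⟨j, hj⟩, hxj⟩
      exact hmin j hxj hj
    · exact ⟨Classical.arbitrary I, fun h => absurd h hx⟩
  choose rk hrk using this
  exact ⟨rk, hrk⟩

theorem GammaClosed.iUnion_Iio {ι I : Type*} [LinearOrder I] {g : ι → Fin 3 → X →+ X}
    {T : I → Set X} (hmono : Monotone T) (hT : ∀ i, GammaClosed g (T i)) {i j : I} (hji : j < i) :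
    GammaClosed g (⋃ j : Iio i, T j) :=
  have : Nonempty (Iio i) := ⟨⟨j, hji⟩⟩
  GammaClosed.iUnion (hmono.comp (Subtype.mono_coe _)).directed_le fun j => hT j

/-- Sort an edge by rank. If the top rank is attained once, the other two vertices lie in the
Γ-closed union of the earlier layers, which then contains the third; if twice, the remainder
colouring separates the two top vertices; if three times, the layer colouring does. -/
theorem exists_properColoringOn_iUnion {ι I : Type*} [Countable ι] [LinearOrder I]
    [WellFoundedLT I] {g : ι → Fin 3 → X →+ X} {T : I → Set X} (hmono : Monotone T)
    (hT : ∀ i, GammaClosed g (T i)) (hcol : ∀ i, ∃ d, ProperColoringOn g d (T i)) :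
    ∃ c, ProperColoringOn g c (⋃ i, T i) := by
  cases isEmpty_or_nonempty I with
  | inl _ => exact ⟨0, by simp [ProperColoringOn]⟩
  | inr _ => ?_
  let U (i : I) : Set X := ⋃ j : Iio i, T j
  have he (i : I) : ∃ e : X → ℕ, ∀ j < i, ∀ x y, RemAdj g (U i) x y → e x ≠ e y := by
    by_cases h : ∃ j, j < i
    · obtain ⟨j, hj⟩ := h
      exact (GammaClosed.iUnion_Iio hmono hT hj).exists_coloring_remAdj.imp fun e he _ _ => he
    · exact ⟨0, fun j hj => absurd ⟨j, hj⟩ h⟩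
  choose d hd using hcol
  choose e he using he
  obtain ⟨rk, hrk⟩ := exists_rank T
  have below {w} (hw : w ∈ ⋃ i, T i) {i} (h : rk w < i) : w ∈ U i :=
    mem_iUnion.2 ⟨⟨rk w, h⟩, (hrk w hw).1⟩
  let c (x : X) : ℕ := Nat.pair (d (rk x) x) (e (rk x) x)
  refine ⟨c, fun x hx y hy z hz hxyz hc => ?_⟩
  let P (x y z : X) : Prop := x ∈ ⋃ i, T i ∧ y ∈ ⋃ i, T i ∧ z ∈ ⋃ i, T i ∧
    GEdge g x y z ∧ c x = c y ∧ c y = c z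
  obtain ⟨x, y, z, ⟨hx, hy, hz, ⟨k, hxyz⟩, hcxy, hcyz⟩, hzy, hyx⟩ := exists_sorted_of_swap rk
    (P := P) (fun ⟨hx, hy, hz, h, h₁, h₂⟩ => ⟨hy, hx, hz, h.swap₀₁, h₁.symm, h₁.trans h₂⟩)
    (fun ⟨hx, hy, hz, h, h₁, h₂⟩ => ⟨hx, hz, hy, h.swap₁₂, h₁.trans h₂, h₂.symm⟩)
    ⟨hx, hy, hz, hxyz, hc⟩
  obtain ⟨hdxy, hexy⟩ := Nat.pair_eq_pair.1 hcxy
  obtain ⟨hdyz, -⟩ := Nat.pair_eq_pair.1 hcyz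
  rcases hyx.lt_or_eq with hyx | hyx
  · exact (hrk x hx).2 ((GammaClosed.iUnion_Iio hmono hT hyx).mem_of_slimEdge hxyz
      (below hy hyx) (below hz (hzy.trans_lt hyx)))
  rw [hyx] at hzy hdxy hexy hdyz
  rcases hzy.lt_or_eq with hzy | hzy
  · exact he (rk x) _ hzy x y ⟨(hrk x hx).2, hyx ▸ (hrk y hy).2, hxyz.1, k, z, below hz hzy,
      hxyz⟩ hexy
  · rw [hzy] at hdyz
    exact hd (rk x) x (hrk x hx).1 y (hyx ▸ (hrk y hy).1) z (hzy ▸ (hrk z hz).1) ⟨k, hxyz⟩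
      ⟨hdxy, hdyz⟩

theorem mk_le_mk_Iio_add_aleph0 {α I : Type u} [LinearOrder I] [WellFoundedLT I]
    {T : I → Set α} (hT : ∀ i, #(T i) ≤ #(⋃ j : Iio i, T j) + ℵ₀) (i : I) :
    #(T i) ≤ #(Iio i) + ℵ₀ := by
  induction i using WellFoundedLT.induction with
  | _ i ih =>
  have hμ : ℵ₀ ≤ #(Iio i) + ℵ₀ := le_add_self
  have hsup : ⨆ j : Iio i, #(T j) ≤ #(Iio i) + ℵ₀ := ciSup_le' fun j =>
    (ih j j.2).trans (add_le_add (mk_le_mk_of_subset (Iio_subset_Iio j.2.le)) le_rfl)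
  calc #(T i) ≤ #(⋃ j : Iio i, T j) + ℵ₀ := hT i
    _ ≤ (#(Iio i) + ℵ₀) * (#(Iio i) + ℵ₀) + ℵ₀ :=
      add_le_add_left ((mk_iUnion_le _).trans (mul_le_mul' le_self_add hsup)) _
    _ = #(Iio i) + ℵ₀ := by rw [mul_eq_self hμ, add_eq_left hμ le_add_self]

theorem exists_monotone_cover {α : Type u} {P : Set α → Prop}
    (hP : ∀ S : Set α, ∃ T, S ⊆ T ∧ P T ∧ #T ≤ #S + ℵ₀) {A : Set α} (hA : ℵ₀ < #A) :
    ∃ T : (#A).ord.ToType → Set α,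
      Monotone T ∧ (∀ i, P (T i)) ∧ (∀ i, #(T i) < #A) ∧ A ⊆ ⋃ i, T i := by
  choose cl hsub hcl hcard using hP
  obtain ⟨φ⟩ : Nonempty ((#A).ord.ToType ≃ A) := Cardinal.eq.1 (by rw [mk_toType, card_ord])
  let T := wellFounded_lt.fix fun i T' => cl (insert (φ i : α) (⋃ j : Iio i, T' j j.2))
  have hT (i) : T i = cl (insert (φ i : α) (⋃ j : Iio i, T j)) := wellFounded_lt.fix_eq _ i
  have hlt {i j} (hji : j < i) : T j ⊆ T i := by
    rw [hT i]
    exact (subset_iUnion (fun j : Iio i => T j) ⟨j, hji⟩).trans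
      ((subset_insert _ _).trans (hsub _))
  refine ⟨T, fun j i hji => ?_, fun i => hT i ▸ hcl _, fun i => ?_, fun x hx => ?_⟩
  · rcases hji.lt_or_eq with hji | rfl
    exacts [hlt hji, subset_rfl]
  · refine (mk_le_mk_Iio_add_aleph0 (T := T) (fun i => ?_) i).trans_lt
      (add_lt_of_lt hA.le (by simpa using mk_Iio_lt i) hA)
    calc #(T i) ≤ #(insert (φ i : α) (⋃ j : Iio i, T j) : Set α) + ℵ₀ := hT i ▸ hcard _
      _ ≤ #(⋃ j : Iio i, T j) + 1 + ℵ₀ := add_le_add_left mk_insert_le _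
      _ = #(⋃ j : Iio i, T j) + ℵ₀ := by rw [add_assoc, add_comm 1, add_one_eq le_rfl]
  · refine mem_iUnion.2 ⟨φ.symm ⟨x, hx⟩, ?_⟩
    rw [hT]
    exact hsub _ (by simp)

theorem exists_gammaClosed_superset [Infinite X] {ι : Type*} {g : ι → Fin 3 → X →+ X}
    (hcl : ∀ S : Set X, S.Infinite → ∃ T : Set X, S ⊆ T ∧ GammaClosed g T ∧ #T = #S)
    (S : Set X) : ∃ T, S ⊆ T ∧ GammaClosed g T ∧ #T ≤ #S + ℵ₀ := by
  let N := range (Infinite.natEmbedding X)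
  obtain ⟨T, hST, hT, hcard⟩ := hcl (S ∪ N)
    ((infinite_range_of_injective (Infinite.natEmbedding X).injective).mono subset_union_right)
  refine ⟨T, subset_union_left.trans hST, hT, hcard ▸ (mk_union_le S N).trans ?_⟩
  exact add_le_add_right (le_aleph0_iff_set_countable.2 (countable_range _)) _

theorem exists_properColoringOn {ι : Type*} [Countable ι] {g : ι → Fin 3 → X →+ X}
    (hcl : ∀ S : Set X, S.Infinite → ∃ T : Set X, S ⊆ T ∧ GammaClosed g T ∧ #T = #S)
    (A : Set X) : ∃ c, ProperColoringOn g c A := by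
  induction hκ : #A using WellFoundedLT.induction generalizing A with
  | _ κ ih =>
  rcases le_or_gt #A ℵ₀ with hA | hA
  · obtain ⟨c, hc⟩ := countable_iff_exists_injOn.1 (le_aleph0_iff_set_countable.1 hA)
    exact ⟨c, properColoringOn_of_injOn hc⟩
  have : Infinite A := Cardinal.infinite_iff.2 hA.le
  have : Infinite X := Infinite.of_injective (Subtype.val : A → X) Subtype.val_injective
  obtain ⟨T, hmono, hT, hcard, hcover⟩ := exists_monotone_cover (exists_gammaClosed_superset hcl) hA
  obtain ⟨c, hc⟩ := exists_properColoringOn_iUnion hmono hT fun i => ih _ (hκ ▸ hcard i) (T i) rfl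
  exact ⟨c, hc.mono hcover⟩

theorem stmt9_general (g : ℕ → Fin 3 → X →+ X)
    (hcl : ∀ S : Set X, S.Infinite →
      ∃ T : Set X, S ⊆ T ∧ GammaClosed g T ∧ Cardinal.mk T = Cardinal.mk S) :
    ∃ c : X → ℕ, ∀ x₀ x₁ x₂ : X, GEdge g x₀ x₁ x₂ →
      ¬(c x₀ = c x₁ ∧ c x₁ = c x₂) := by
  obtain ⟨c, hc⟩ := exists_properColoringOn hcl univ
  exact ⟨c, fun x₀ x₁ x₂ => hc x₀ trivial x₁ trivial x₂ trivial⟩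

/-- If every infinite subset of `X` has a Γ-closed superset of the same cardinality
(which holds e.g. for standard Borel abelian groups), then a countable union Γ of slim
linear hypergraphs of arity three has countable chromatic number. -/
theorem stmt9 (g : ℕ → Fin 3 → X →+ X) (hg : ∀ i, IsSlim (g i))
    (hcl : ∀ S : Set X, S.Infinite →
      ∃ T : Set X, S ⊆ T ∧ GammaClosed g T ∧ Cardinal.mk T = Cardinal.mk S) :
    ∃ c : X → ℕ, ∀ x₀ x₁ x₂ : X, GEdge g x₀ x₁ x₂ →
      ¬(c x₀ = c x₁ ∧ c x₁ = c x₂) :=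
  stmt9_general g hcl
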